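/- arXiv:1206.0265 — 2 statements merged into one kernel-verified Lean document; each statement's English description precedes it below -/
import Mathlib

section
/- Let f, g : ℝ^N → ℝ be quasiconvex functions such that f = g almost everywhere with respect to Lebesgue measure, and let m ∈ [−∞, ∞) denote their common essential infimum over ℝ^N. Then every point of approximate continuity of g is a point of approximate continuity of f if and only if there is no point x of approximate continuity of g with m finite, g(x) = m and f(x) < m. In that case, f(x) = g(x) at every point x of approximate continuity of g. -/
/-!
Since `f = g` a.e., the sets `{|f - c| < ε}` and `{|g - c| < ε}` differ by a null set. Two
a.e.-disjoint sets cannot both have density one at `x`, so at a point `x` of approximate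
continuity of `g`, the function `f` is approximately continuous exactly when `f x = g x`.

Quasiconvexity of `f` gives `f x ≤ g x`: otherwise the convex set `{f < α}`, `g x < α < f x`,
would have density one at `x` without containing `x`, whereas a convex set missing `x` is disjoint
from its reflection through `x`. If `f x < α < g x`, the convex set `{f < α}` contains `x`; unless
it is null it occupies a fixed proportion of every small ball around `x` (by homothety), which is
incompatible with `{|g - g x| < g x - α}` having density one. Hence `f x < g x` forces
`g x ≤ ess inf f`, and always `ess inf g ≤ g x`, so `g x = m`.
-/

open MeasureTheory Metric Filter

/-- `f` is approximately continuous at `x` if for every `ε > 0` the set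
`{y | |f y - f x| < ε}` has Lebesgue density `1` at `x`. -/
def ApproxContinuousAt {N : ℕ} (f : EuclideanSpace ℝ (Fin N) → ℝ)
    (x : EuclideanSpace ℝ (Fin N)) : Prop :=
  ∀ ε : ℝ, 0 < ε →
    Tendsto (fun r : ℝ => volume ({y | |f y - f x| < ε} ∩ ball x r) / volume (ball x r))
      (nhdsWithin 0 (Set.Ioi 0)) (nhds 1)

open Set
open scoped ENNReal Topology

section Density

variable {E : Type*} [PseudoMetricSpace E] [MeasurableSpace E] (μ : Measure E)

noncomputable def densityRatio (s : Set E) (x : E) (r : ℝ) : ℝ≥0∞ :=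
  μ (s ∩ ball x r) / μ (ball x r)

def HasDensityOneAt (s : Set E) (x : E) : Prop :=
  Tendsto (densityRatio μ s x) (𝓝[>] 0) (𝓝 1)

variable {μ} {s t : Set E} {x : E}

theorem densityRatio_le_one (r : ℝ) : densityRatio μ s x r ≤ 1 :=
  (ENNReal.div_le_div_right (measure_mono inter_subset_right) _).trans ENNReal.div_self_le_one

theorem densityRatio_add_le_one [OpensMeasurableSpace E] (hst : AEDisjoint μ s t)
    (ht : NullMeasurableSet t μ) (r : ℝ) :
    densityRatio μ s x r + densityRatio μ t x r ≤ 1 := by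
  rw [densityRatio, densityRatio, ENNReal.div_add_div_same,
    ← measure_union₀ (ht.inter measurableSet_ball.nullMeasurableSet)
      (hst.mono inter_subset_left inter_subset_left), ← union_inter_distrib_right]
  exact densityRatio_le_one (s := s ∪ t) r

theorem densityRatio_congr_ae (hst : s =ᵐ[μ] t) : densityRatio μ s x = densityRatio μ t x :=
  funext fun r => by
    rw [densityRatio, densityRatio, measure_congr (hst.inter (EventuallyEq.refl _ (ball x r)))]

theorem HasDensityOneAt.congr_ae (h : HasDensityOneAt μ s x) (hst : s =ᵐ[μ] t) :
    HasDensityOneAt μ t x := by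
  rwa [HasDensityOneAt, ← densityRatio_congr_ae hst]

theorem HasDensityOneAt.mono_ae (h : HasDensityOneAt μ s x) (hst : s ≤ᵐ[μ] t) :
    HasDensityOneAt μ t x :=
  tendsto_of_tendsto_of_tendsto_of_le_of_le h tendsto_const_nhds
    (fun _ => ENNReal.div_le_div_right (measure_mono_ae (hst.inter (EventuallyLE.refl _ _))) _)
    densityRatio_le_one

theorem HasDensityOneAt.tendsto_densityRatio_zero [OpensMeasurableSpace E]
    (h : HasDensityOneAt μ s x) (hst : AEDisjoint μ s t) (ht : NullMeasurableSet t μ) :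
    Tendsto (densityRatio μ t x) (𝓝[>] 0) (𝓝 0) := by
  have hcompl : Tendsto (fun r => 1 - densityRatio μ s x r) (𝓝[>] 0) (𝓝 0) := by
    simpa using ENNReal.Tendsto.sub tendsto_const_nhds h (Or.inl ENNReal.one_ne_top)
  refine tendsto_of_tendsto_of_tendsto_of_le_of_le tendsto_const_nhds hcompl (fun _ => zero_le)
    fun r => ENNReal.le_sub_of_add_le_left (ne_top_of_le_ne_top ENNReal.one_ne_top
      (densityRatio_le_one r)) (densityRatio_add_le_one hst ht r)

theorem HasDensityOneAt.not_aedisjoint [OpensMeasurableSpace E] (hs : HasDensityOneAt μ s x)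
    (ht : HasDensityOneAt μ t x) (htm : NullMeasurableSet t μ) :
    ¬ AEDisjoint μ s t := fun hst =>
  zero_ne_one (tendsto_nhds_unique (hs.tendsto_densityRatio_zero hst htm) ht)

theorem HasDensityOneAt.measure_ne_zero [OpensMeasurableSpace E] (h : HasDensityOneAt μ s x) :
    μ s ≠ 0 := fun h0 =>
  h.not_aedisjoint h (.of_null h0) (measure_mono_null inter_subset_left h0)

end Density

section Convex

variable {E : Type*} [NormedAddCommGroup E] [NormedSpace ℝ E] [FiniteDimensional ℝ E]
  [MeasurableSpace E] [BorelSpace E] {μ : Measure E} [μ.IsAddHaarMeasure] {s t : Set E} {x : E}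

theorem HasDensityOneAt.preimage_sub_left (h : HasDensityOneAt μ s x) :
    HasDensityOneAt μ ((x + x - ·) ⁻¹' s) x := by
  have hball (r : ℝ) : (x + x - ·) ⁻¹' ball x r = ball x r := by
    ext y
    rw [mem_preimage, mem_ball, mem_ball, dist_eq_norm, dist_eq_norm, ← norm_neg]
    congr! 2
    abel
  have hratio : densityRatio μ ((x + x - ·) ⁻¹' s) x = densityRatio μ s x := by
    funext r
    refine congrArg (· / μ (ball x r)) ?_
    calc μ ((x + x - ·) ⁻¹' s ∩ ball x r) = μ ((x + x - ·) ⁻¹' (s ∩ ball x r)) := by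
          rw [preimage_inter, hball]
      _ = μ (s ∩ ball x r) :=
          (Measure.measurePreserving_sub_left μ (x + x)).measure_preimage_emb
            (measurableEmbedding_subLeft _) _
  rwa [HasDensityOneAt, hratio]

theorem Convex.mem_of_hasDensityOneAt (hs : Convex ℝ s) (h : HasDensityOneAt μ s x) :
    x ∈ s := by
  by_contra hx
  refine h.preimage_sub_left.not_aedisjoint h (hs.nullMeasurableSet μ)
    (Disjoint.aedisjoint (disjoint_left.mpr fun y hy hy' => hx ?_))
  convert hs.lineMap_mem hy hy' (t := (1 / 2 : ℝ)) ⟨by norm_num, by norm_num⟩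
  rw [AffineMap.lineMap_apply_module]
  module

theorem Convex.exists_le_densityRatio (hs : Convex ℝ s) (hx : x ∈ s) (hμ : μ s ≠ 0) :
    ∃ κ ≠ 0, ∀ᶠ r in 𝓝[>] 0, κ ≤ densityRatio μ s x r := by
  obtain ⟨z, hz⟩ : (interior s).Nonempty := by
    by_contra hi
    refine hμ (measure_mono_null (fun y hy => ?_) (hs.addHaar_frontier μ))
    rw [not_nonempty_iff_eq_empty] at hi
    simpa [frontier, hi] using subset_closure hy
  obtain ⟨δ, hδ, hzs⟩ := isOpen_iff.mp isOpen_interior z hz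
  set R := dist z x + δ
  have hR : 0 < R := by positivity
  -- The homothety centred at `x` with ratio `r / R` maps `ball z δ` into `s ∩ ball x r`
  -- and scales the measure of `ball x R` to that of `ball x r`.
  refine ⟨μ (ball z δ) / μ (ball x R), ?_, ?_⟩
  · exact ENNReal.div_ne_zero.2 ⟨(measure_ball_pos μ z hδ).ne', measure_ball_lt_top.ne⟩
  filter_upwards [Ioc_mem_nhdsGT hR] with r ⟨hr, hrR⟩
  set t := r / R
  have ht : 0 < t := by positivity
  have hsub : AffineMap.homothety x t '' ball z δ ⊆ s ∩ ball x r := by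
    rintro _ ⟨y, hy, rfl⟩
    refine ⟨?_, ?_⟩
    · rw [AffineMap.homothety_eq_lineMap]
      exact hs.lineMap_mem hx (interior_subset (hzs hy))
        ⟨ht.le, (div_le_one hR).2 hrR⟩
    · rw [mem_ball, dist_homothety_center, Real.norm_of_nonneg ht.le]
      calc t * dist x y < t * R := by
            gcongr
            linarith [dist_triangle x z y, mem_ball'.1 hy, dist_comm x z]
        _ = r := div_mul_cancel₀ r hR.ne'
  have hscale : μ (ball x r) = ENNReal.ofReal (t ^ Module.finrank ℝ E) * μ (ball x R) := by
    rw [← div_mul_cancel₀ r hR.ne', Measure.addHaar_ball_mul_of_pos μ x ht,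
      Measure.addHaar_ball_center μ x]
  calc μ (ball z δ) / μ (ball x R)
      = μ (AffineMap.homothety x t '' ball z δ) / μ (ball x r) := by
        rw [Measure.addHaar_image_homothety, hscale, abs_of_pos (by positivity),
          ENNReal.mul_div_mul_left _ _ (by positivity) ENNReal.ofReal_ne_top]
    _ ≤ densityRatio μ s x r := ENNReal.div_le_div_right (measure_mono hsub) _

theorem Convex.measure_eq_zero_of_aedisjoint (hs : Convex ℝ s) (hx : x ∈ s)
    (ht : HasDensityOneAt μ t x) (hts : AEDisjoint μ t s) : μ s = 0 := by
  by_contra hμ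
  obtain ⟨κ, hκ, hle⟩ := hs.exists_le_densityRatio hx hμ
  exact hκ (nonpos_iff_eq_zero.mp
    (ge_of_tendsto (ht.tendsto_densityRatio_zero hts (hs.nullMeasurableSet μ)) hle))

theorem nullMeasurable_of_convex_sublevel {g : E → ℝ} (hg : ∀ α, Convex ℝ {y | g y < α}) :
    NullMeasurable g μ :=
  measurable_of_Iio fun α => (hg α).nullMeasurableSet μ

end Convex

section ApproxContinuity

variable {N : ℕ} {f g : EuclideanSpace ℝ (Fin N) → ℝ} {x : EuclideanSpace ℝ (Fin N)}

theorem approxContinuousAt_iff :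
    ApproxContinuousAt g x ↔ ∀ ε > 0, HasDensityOneAt volume {y | |g y - g x| < ε} x :=
  Iff.rfl

theorem ApproxContinuousAt.congr_of_ae_eq (hg : ApproxContinuousAt g x) (hfg : f =ᵐ[volume] g)
    (hx : f x = g x) : ApproxContinuousAt f x := fun ε hε =>
  (approxContinuousAt_iff.1 hg ε hε).congr_ae <| by
    filter_upwards [hfg] with y hy
    change (|g y - g x| < ε) = (|f y - f x| < ε)
    rw [hy, hx]

theorem ApproxContinuousAt.eq_of_ae_eq (hf : ApproxContinuousAt f x)
    (hg : ApproxContinuousAt g x) (hgm : NullMeasurable g volume) (hfg : f =ᵐ[volume] g) :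
    f x = g x := by
  by_contra hne
  set ε := |f x - g x| / 2 with hε_def
  have hε : 0 < ε := by positivity [sub_ne_zero.2 hne]
  refine (approxContinuousAt_iff.1 hf ε hε).not_aedisjoint (approxContinuousAt_iff.1 hg ε hε)
    (hgm measurableSet_ball : NullMeasurableSet (g ⁻¹' ball (g x) ε) volume)
    (measure_eq_zero_iff_ae_notMem.2 ?_)
  filter_upwards [hfg] with y hy
  rintro ⟨hfy : |f y - f x| < ε, hgy : |g y - g x| < ε⟩
  rw [hy, abs_sub_comm] at hfy
  linarith [abs_sub_le (f x) (g y) (g x)]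

theorem ApproxContinuousAt.essInf_le (hg : ApproxContinuousAt g x) :
    essInf (fun y => (g y : EReal)) volume ≤ g x := by
  by_contra! hlt
  obtain ⟨c, hgc, hc⟩ := EReal.exists_between_coe_real hlt
  refine (approxContinuousAt_iff.1 hg (c - g x) (by simpa [sub_pos] using hgc)).measure_ne_zero
    (measure_eq_zero_iff_ae_notMem.2 ?_)
  filter_upwards [ae_lt_of_lt_essInf hc] with y hy
  simp only [abs_lt, EReal.coe_lt_coe_iff] at hy ⊢
  intro ⟨_, h⟩
  linarith

theorem ApproxContinuousAt.le_of_ae_eq (hg : ApproxContinuousAt g x)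
    (hf : ∀ α : ℝ, Convex ℝ {y | f y < α}) (hfg : f =ᵐ[volume] g) : f x ≤ g x := by
  by_contra! hlt
  set α := (g x + f x) / 2 with hα
  have hdense : HasDensityOneAt volume {y | f y < α} x := by
    refine (approxContinuousAt_iff.1 hg ((f x - g x) / 2) (by linarith)).mono_ae ?_
    filter_upwards [hfg] with y hy (hy' : |g y - g x| < _)
    show f y < α
    linarith [(abs_lt.1 hy').2]
  have hxα : f x < α := (hf α).mem_of_hasDensityOneAt hdense
  linarith

theorem ApproxContinuousAt.measure_sublevel_eq_zero (hg : ApproxContinuousAt g x)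
    (hf : ∀ α : ℝ, Convex ℝ {y | f y < α}) (hfg : f =ᵐ[volume] g) {α : ℝ}
    (hfα : f x < α) (hαg : α < g x) : volume {y | f y < α} = 0 := by
  refine (hf α).measure_eq_zero_of_aedisjoint hfα
    (approxContinuousAt_iff.1 hg (g x - α) (by linarith)) (measure_eq_zero_iff_ae_notMem.2 ?_)
  filter_upwards [hfg] with y hy
  simp only [mem_inter_iff, mem_ofPred_eq, abs_lt, hy]
  intro ⟨⟨h, _⟩, h'⟩
  linarith

theorem ApproxContinuousAt.le_essInf (hg : ApproxContinuousAt g x)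
    (hf : ∀ α : ℝ, Convex ℝ {y | f y < α}) (hfg : f =ᵐ[volume] g) (hlt : f x < g x) :
    (g x : EReal) ≤ essInf (fun y => (f y : EReal)) volume := by
  refine le_of_forall_lt_imp_le_of_dense fun a ha => ?_
  obtain ⟨α, hα, hαg⟩ := EReal.exists_between_coe_real (max_lt ha (EReal.coe_lt_coe hlt))
  refine (le_max_left _ _ |>.trans hα.le).trans (le_essInf_of_ae_le _ ?_)
  filter_upwards [measure_eq_zero_iff_ae_notMem.1 (hg.measure_sublevel_eq_zero hf hfg
    (EReal.coe_lt_coe_iff.1 ((le_max_right _ _).trans_lt hα)) (EReal.coe_lt_coe_iff.1 hαg))]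
    with y hy
  simpa using hy

end ApproxContinuity

theorem stmt_15_general {N : ℕ} (f g : EuclideanSpace ℝ (Fin N) → ℝ)
    (hf : ∀ α : ℝ, Convex ℝ {x | f x < α}) (hg : ∀ α : ℝ, Convex ℝ {x | g x < α})
    (hfg : f =ᵐ[volume] g) (m : EReal)
    (hm : m = essInf (fun x => (f x : EReal)) volume) :
    ((∀ x, ApproxContinuousAt g x → ApproxContinuousAt f x) ↔
      ¬ ∃ x, ApproxContinuousAt g x ∧ m ≠ ⊥ ∧ (g x : EReal) = m ∧ (f x : EReal) < m) ∧
    ((∀ x, ApproxContinuousAt g x → ApproxContinuousAt f x) →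
      ∀ x, ApproxContinuousAt g x → f x = g x) := by
  have hgm : NullMeasurable g volume := nullMeasurable_of_convex_sublevel hg
  have eq_of_forall (hac : ∀ x, ApproxContinuousAt g x → ApproxContinuousAt f x) x
      (hgx : ApproxContinuousAt g x) : f x = g x :=
    (hac x hgx).eq_of_ae_eq hgx hgm hfg
  refine ⟨⟨fun hac ⟨x, hgx, _, hgxm, hfxm⟩ => ?_, fun hnone x hgx => ?_⟩, eq_of_forall⟩
  · rw [← hgxm, eq_of_forall hac x hgx] at hfxm
    exact hfxm.false
  refine hgx.congr_of_ae_eq hfg ((hgx.le_of_ae_eq hf hfg).antisymm (not_lt.1 fun hlt => hnone ?_))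
  have hgxm : (g x : EReal) = m := by
    rw [hm]
    refine le_antisymm (hgx.le_essInf hf hfg hlt) ?_
    have hfg' : (fun y => (f y : EReal)) =ᵐ[volume] fun y => (g y : EReal) :=
      hfg.mono fun y hy => congrArg _ hy
    exact (essInf_congr_ae hfg').trans_le hgx.essInf_le
  exact ⟨x, hgx, hgxm ▸ EReal.coe_ne_bot _, hgxm, hgxm ▸ EReal.coe_lt_coe hlt⟩

theorem stmt_15 {N : ℕ} (f g : EuclideanSpace ℝ (Fin N) → ℝ)
    (hf : ∀ α : ℝ, Convex ℝ {x | f x < α}) (hg : ∀ α : ℝ, Convex ℝ {x | g x < α})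
    (hfg : f =ᵐ[volume] g) (m : EReal)
    (hm : m = essInf (fun x => (f x : EReal)) volume) (hmtop : m ≠ ⊤) :
    ((∀ x, ApproxContinuousAt g x → ApproxContinuousAt f x) ↔
      ¬ ∃ x, ApproxContinuousAt g x ∧ m ≠ ⊥ ∧ (g x : EReal) = m ∧ (f x : EReal) < m) ∧
    ((∀ x, ApproxContinuousAt g x → ApproxContinuousAt f x) →
      ∀ x, ApproxContinuousAt g x → f x = g x) :=
  stmt_15_general f g hf hg hfg m hm
end

section
/- Let f, g : ℝ^N → ℝ be quasiconvex functions such that f = g almost everywhere with respect to Lebesgue measure, and let m ∈ [−∞, ∞) denote their common essential infimum over ℝ^N. Then every point of continuity of g is a point of continuity of f if and only if there is no point x of continuity of g such that m is finite, g(x) = m, and x is the limit of a sequence (x_n) in ℝ^N with f(x_n) < α for some real α < m and every n. In that case, f(x) = g(x) at every point x of continuity of g. -/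
/-!
At a continuity point `x` of `g`, each sublevel set `{f < β}` with `β > g x` contains, up to a
null set, a neighbourhood of `x`; being convex, it then contains that whole neighbourhood, so
`limsup f ≤ g x` at `x`. Hence `f` can only fail to be continuous at `x` by dipping below some
`α < g x` arbitrarily close to `x`. Since `g` is continuous at `x` and `g ≥ m` a.e., `m ≤ g x`.
If `m < g x`, a sublevel set `{f < γ}` with `max m α < γ < g x` has positive measure, hence
nonempty interior, and it meets every neighbourhood of `x`; a convex set with nonempty interior
meets every open set it meets in positive measure, which contradicts `f = g > γ` a.e. near `x`.
So a discontinuity forces exactly the exceptional configuration `g x = m`, and conversely such a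
configuration gives `f x < m`, which is impossible at a continuity point of `f`.
-/

open MeasureTheory Filter Set Topology

section OpenPos

variable {X Y : Type*} [TopologicalSpace X] [MeasurableSpace X] {μ : Measure X}
  [μ.IsOpenPosMeasure] {x : X}

lemma le_of_ae_le_of_continuousAt [TopologicalSpace Y] [LinearOrder Y] [ClosedIciTopology Y]
    {g : X → Y} {c : Y} (hae : ∀ᵐ y ∂μ, c ≤ g y) (hg : ContinuousAt g x) : c ≤ g x := by
  by_contra! hlt
  obtain ⟨y, hcy, hyc⟩ := (Measure.dense_of_ae hae).inter_nhds_nonempty (hg (Iio_mem_nhds hlt))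
  exact (lt_irrefl c) (hcy.trans_lt hyc)

lemma eq_of_ae_eq_of_continuousAt [TopologicalSpace Y] [T2Space Y] {f g : X → Y}
    (hfg : f =ᵐ[μ] g) (hf : ContinuousAt f x) (hg : ContinuousAt g x) : f x = g x := by
  set s := {y | f y = g y}
  have hx : x ∈ closure s := by
    rw [(Measure.dense_of_ae hfg).closure_eq]; exact mem_univ x
  have : (𝓝[s] x).NeBot := mem_closure_iff_nhdsWithin_neBot.1 hx
  exact tendsto_nhds_unique (hf.mono_left nhdsWithin_le_nhds)
    ((hg.mono_left nhdsWithin_le_nhds).congr'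
      (eventually_nhdsWithin_of_forall (s := s) fun _ hy => hy.symm))

end OpenPos

lemma measure_setOf_lt_pos_of_essInf_lt {α β : Type*} [MeasurableSpace α] {μ : Measure α}
    [CompleteLinearOrder β] {f : α → β} {c : β} (h : essInf f μ < c) :
    0 < μ {y | f y < c} := by
  refine pos_iff_ne_zero.2 fun h0 => h.not_ge (le_essInf_of_ae_le c ?_)
  rw [EventuallyLE, ae_iff]
  simpa only [not_le] using h0

section Convex

variable {E : Type*} [NormedAddCommGroup E] [NormedSpace ℝ E] [MeasurableSpace E]
  {μ : Measure E} {C U : Set E}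

lemma Convex.measure_inter_pos_of_isOpen [μ.IsOpenPosMeasure] (hC : Convex ℝ C)
    (hint : (interior C).Nonempty) (hU : IsOpen U) (hUC : (U ∩ C).Nonempty) :
    0 < μ (U ∩ C) := by
  obtain ⟨y, hyU, hyC⟩ := hUC
  have hy : y ∈ closure (interior C) :=
    (hC.closure_interior_eq_closure_of_nonempty_interior hint).symm ▸ subset_closure hyC
  obtain ⟨z, hzU, hzC⟩ := mem_closure_iff.1 hy U hU hyU
  exact ((hU.inter isOpen_interior).measure_pos μ ⟨z, hzU, hzC⟩).trans_le
    (measure_mono (inter_subset_inter_right U interior_subset))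

variable [BorelSpace E] [FiniteDimensional ℝ E] [μ.IsAddHaarMeasure]

lemma Convex.interior_nonempty_of_measure_pos (hC : Convex ℝ C) (h : 0 < μ C) :
    (interior C).Nonempty := by
  by_contra! hint
  have hfr : C ⊆ frontier C := by
    rw [frontier, hint, sdiff_empty]; exact subset_closure
  exact h.ne' (measure_mono_null hfr (hC.addHaar_frontier μ))

lemma Convex.subset_of_isOpen_of_ae_le (hC : Convex ℝ C) (hU : IsOpen U) (h : U ≤ᵐ[μ] C) :
    U ⊆ C := by
  rcases U.eq_empty_or_nonempty with rfl | hne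
  · exact empty_subset C
  have hint : (interior C).Nonempty :=
    hC.interior_nonempty_of_measure_pos ((hU.measure_pos μ hne).trans_le (measure_mono_ae h))
  have hcl : U ⊆ closure C := fun y hy => mem_closure_iff_nhds.2 fun t ht => by
    obtain ⟨z, hzC, hzt, hzU⟩ :=
      (Measure.dense_of_ae h).inter_nhds_nonempty (inter_mem ht (hU.mem_nhds hy))
    exact ⟨z, hzt, hzC hzU⟩
  calc U ⊆ interior (closure C) := interior_maximal hcl hU
    _ = interior C := hC.interior_closure_eq_interior_of_nonempty_interior hint
    _ ⊆ C := interior_subset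

end Convex

section Quasiconvex

variable {E : Type*} [NormedAddCommGroup E] [NormedSpace ℝ E] [MeasurableSpace E] [BorelSpace E]
  [FiniteDimensional ℝ E] {μ : Measure E} [μ.IsAddHaarMeasure] {f g : E → ℝ} {x : E}

lemma eventually_lt_of_ae_eq_of_continuousAt (hf : ∀ α : ℝ, Convex ℝ {x | f x < α})
    (hfg : f =ᵐ[μ] g) (hgx : ContinuousAt g x) {β : ℝ} (hβ : g x < β) :
    ∀ᶠ y in 𝓝 x, f y < β := by
  obtain ⟨U, hUg, hU, hxU⟩ := mem_nhds_iff.1 (hgx (Iio_mem_nhds hβ))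
  refine mem_of_superset (hU.mem_nhds hxU) ((hf β).subset_of_isOpen_of_ae_le (μ := μ) hU ?_)
  filter_upwards [hfg] with y hy hyU
  exact show f y < β from hy ▸ hUg hyU

lemma exists_frequently_lt_of_not_continuousAt (hf : ∀ α : ℝ, Convex ℝ {x | f x < α})
    (hfg : f =ᵐ[μ] g) (hgx : ContinuousAt g x) (hfx : ¬ ContinuousAt f x) :
    ∃ α < g x, ∃ᶠ y in 𝓝 x, f y < α := by
  have hlim : ¬ ∀ β < g x, ∀ᶠ y in 𝓝 x, β < f y := fun h =>
    hfx <| continuousAt_of_tendsto_nhds <| tendsto_order.2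
      ⟨h, fun _ hβ => eventually_lt_of_ae_eq_of_continuousAt hf hfg hgx hβ⟩
  push Not at hlim
  obtain ⟨β, hβ, hfreq⟩ := hlim
  obtain ⟨α, hβα, hα⟩ := exists_between hβ
  exact ⟨α, hα, hfreq.mono fun y hy => hy.trans_lt hβα⟩

lemma le_essInf_of_frequently_lt (hf : ∀ α : ℝ, Convex ℝ {x | f x < α})
    (hfg : f =ᵐ[μ] g) (hgx : ContinuousAt g x) {α : ℝ} (hα : α < g x)
    (hfreq : ∃ᶠ y in 𝓝 x, f y < α) :
    (g x : EReal) ≤ essInf (fun y => (f y : EReal)) μ := by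
  by_contra! hlt
  obtain ⟨γ, hγm, hγx⟩ :=
    EReal.exists_between_coe_real (max_lt hlt (EReal.coe_lt_coe_iff.2 hα))
  have hαγ : α < γ := EReal.coe_lt_coe_iff.1 ((le_max_right _ _).trans_lt hγm)
  have hγg : γ < g x := EReal.coe_lt_coe_iff.1 hγx
  have hpos : 0 < μ {y | f y < γ} := by
    simpa only [EReal.coe_lt_coe_iff] using
      measure_setOf_lt_pos_of_essInf_lt ((le_max_left _ _).trans_lt hγm)
  obtain ⟨U, hUg, hU, hxU⟩ := mem_nhds_iff.1 (hgx (Ioi_mem_nhds hγg))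
  have hmeet : (U ∩ {y | f y < γ}).Nonempty :=
    (hfreq.and_eventually (hU.mem_nhds hxU)).exists.imp fun y hy => ⟨hy.2, hy.1.trans hαγ⟩
  have hnull : μ (U ∩ {y | f y < γ}) = 0 := by
    refine measure_mono_null ?_ (ae_iff.1 hfg)
    rintro y ⟨hyU, hyγ : f y < γ⟩ heq
    exact (show γ < g y from hUg hyU).not_gt (heq ▸ hyγ)
  exact hnull.not_gt <| (hf γ).measure_inter_pos_of_isOpen
    ((hf γ).interior_nonempty_of_measure_pos hpos) hU hmeet

end Quasiconvex

theorem stmt_16_general {N : ℕ} (f g : EuclideanSpace ℝ (Fin N) → ℝ)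
    (hf : ∀ α : ℝ, Convex ℝ {x | f x < α})
    (hfg : f =ᵐ[volume] g) (m : EReal)
    (hm : m = essInf (fun x => (f x : EReal)) volume) :
    ((∀ x, ContinuousAt g x → ContinuousAt f x) ↔
      ¬ ∃ x, ContinuousAt g x ∧ m ≠ ⊥ ∧ (g x : EReal) = m ∧
        ∃ (u : ℕ → EuclideanSpace ℝ (Fin N)) (α : ℝ), (α : EReal) < m ∧
          (∀ n, f (u n) < α) ∧ Tendsto u atTop (nhds x)) ∧
    ((∀ x, ContinuousAt g x → ContinuousAt f x) →
      ∀ x, ContinuousAt g x → f x = g x) := by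
  have hmf : ∀ᵐ y ∂volume, m ≤ f y := hm ▸ ae_essInf_le
  have hmg : ∀ᵐ y ∂volume, m ≤ g y := by
    filter_upwards [hmf, hfg] with y hy hfgy
    rwa [← hfgy]
  have hm_le {h : EuclideanSpace ℝ (Fin N) → ℝ} (hmh : ∀ᵐ y ∂volume, m ≤ h y) {x}
      (hx : ContinuousAt h x) : m ≤ h x :=
    le_of_ae_le_of_continuousAt (g := fun y => (h y : EReal)) hmh
      (continuous_coe_real_ereal.continuousAt.comp hx)
  refine ⟨⟨?_, ?_⟩, fun h x hgx => eq_of_ae_eq_of_continuousAt hfg (h x hgx) hgx⟩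
  · rintro h ⟨x, hgx, -, -, u, α, hα, hfu, hu⟩
    have hfx : f x ≤ α :=
      le_of_tendsto ((h x hgx).tendsto.comp hu) (Eventually.of_forall fun n => (hfu n).le)
    exact (hm_le hmf (h x hgx)).not_gt ((EReal.coe_le_coe_iff.2 hfx).trans_lt hα)
  · intro hexc x hgx
    by_contra hfx
    obtain ⟨α, hαx, hfreq⟩ := exists_frequently_lt_of_not_continuousAt hf hfg hgx hfx
    have hgm : (g x : EReal) = m :=
      le_antisymm (hm ▸ le_essInf_of_frequently_lt hf hfg hgx hαx hfreq) (hm_le hmg hgx)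
    obtain ⟨u, hu, hfu⟩ := frequently_iff_seq_forall.1 hfreq
    exact hexc ⟨x, hgx, hgm ▸ EReal.coe_ne_bot _, hgm, u, α, hgm ▸ EReal.coe_lt_coe_iff.2 hαx,
      hfu, hu⟩

theorem stmt_16 {N : ℕ} (f g : EuclideanSpace ℝ (Fin N) → ℝ)
    (hf : ∀ α : ℝ, Convex ℝ {x | f x < α}) (hg : ∀ α : ℝ, Convex ℝ {x | g x < α})
    (hfg : f =ᵐ[volume] g) (m : EReal)
    (hm : m = essInf (fun x => (f x : EReal)) volume) (hmtop : m ≠ ⊤) :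
    ((∀ x, ContinuousAt g x → ContinuousAt f x) ↔
      ¬ ∃ x, ContinuousAt g x ∧ m ≠ ⊥ ∧ (g x : EReal) = m ∧
        ∃ (u : ℕ → EuclideanSpace ℝ (Fin N)) (α : ℝ), (α : EReal) < m ∧
          (∀ n, f (u n) < α) ∧ Tendsto u atTop (nhds x)) ∧
    ((∀ x, ContinuousAt g x → ContinuousAt f x) →
      ∀ x, ContinuousAt g x → f x = g x) :=
  stmt_16_general f g hf hfg m hm
end
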